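/- (Intermediate asymptotics of iterated logarithms) Let a fully-connected layered feed-forward network of depth L with one source and one sink have activation f(x) = e^x − 1 and weight family W ∈ W_o, with measured function F = F^L_1. Then for every l ∈ {0,…,L−2}, the quantity log^{∘(L−l)}(F(x)) − Σ_{j ∈ N^l} w^{l+1}_{1j} F^l_j(x) is eventually well defined and converges to log(w^{l+2}_{11}) as x → +∞, where log^{∘m} denotes the m-fold iterate of the natural logarithm. -/

import Mathlib

open Finset Filter

/-- Node outputs of the fully-connected layered feed-forward network with activation
`f x = e^x - 1` and layer sizes `n 0, …, n L`: `expOut n w 0 i x = x` (the source) and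
`expOut n w (l+1) i x = exp (∑_{j < n l} w^{l+1}_{ij} · expOut n w l j x) - 1`, where
`w (l+1) i j` is the weight of the edge from node `j` of layer `l` to node `i` of layer
`l + 1` (nodes are numbered `0, …, n l - 1`; the "first" node of a layer is node `0`). -/
noncomputable def expOut (n : ℕ → ℕ) (w : ℕ → ℕ → ℕ → ℝ) : ℕ → ℕ → ℝ → ℝ
  | 0, _, x => x
  | l + 1, i, x =>
      Real.exp (∑ j ∈ Finset.range (n l), w (l + 1) i j * expOut n w l j x) - 1

/-- The class `W_o` of weight families: all weights are positive and, in each layer and for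
each source node `j`, the weights are strictly decreasing in the destination node index
(`w^l_{1j} > w^l_{2j} > … > w^l_{n_l j}` in 1-based notation). -/
def Wo (L : ℕ) (n : ℕ → ℕ) (w : ℕ → ℕ → ℕ → ℝ) : Prop :=
  (∀ l < L, ∀ i < n (l + 1), ∀ j < n l, 0 < w (l + 1) i j) ∧
  (∀ l < L, ∀ j < n l, ∀ i i' : ℕ, i < i' → i' < n (l + 1) → w (l + 1) i' j < w (l + 1) i j)

/-!
Write `S^l_i = ∑_j w^{l+1}_{ij} F^l_j` for the pre-activations, so that
`F^{l+1}_i = e^{S^l_i} - 1`. Positive weights make every `F^l_j` and `S^l_i` tend to `+∞`.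
At the top layer `log F - S^{L-1}_1 = log (1 - e^{-S^{L-1}_1}) → 0`. One layer down, the
ordering of the weights makes `S^{l+1}_1 e^{-S^l_1} → w^{l+2}_{11}`, because
`S^l_j - S^l_1 → -∞` for `j ≠ 1`. So if `log^{∘m} F - S^{l+1}_1` has a finite limit, then
`log^{∘m} F · e^{-S^l_1} → w^{l+2}_{11}`, and taking logarithms,
`log^{∘(m+1)} F - S^l_1 → log w^{l+2}_{11}`. Downward induction on `l` gives a finite limit
at every layer, and the last step identifies it.
-/

noncomputable def preActivation (n : ℕ → ℕ) (w : ℕ → ℕ → ℕ → ℝ) (l i : ℕ) (x : ℝ) : ℝ :=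
  ∑ j ∈ range (n l), w (l + 1) i j * expOut n w l j x

lemma expOut_succ (n : ℕ → ℕ) (w : ℕ → ℕ → ℕ → ℝ) (l i : ℕ) (x : ℝ) :
    expOut n w (l + 1) i x = Real.exp (preActivation n w l i x) - 1 := rfl

lemma tendsto_finset_sum_atTop {ι α : Type*} {s : Finset ι} {g : ι → α → ℝ} {f : Filter α}
    {i₀ : ι} (hi₀ : i₀ ∈ s) (h : ∀ i ∈ s, Tendsto (g i) f atTop) :
    Tendsto (fun x => ∑ i ∈ s, g i x) f atTop := by
  refine tendsto_atTop_mono' _ ?_ (h i₀ hi₀)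
  have hnonneg : ∀ᶠ x in f, ∀ i ∈ s, 0 ≤ g i x :=
    (eventually_all_finset s).2 fun i hi => (h i hi).eventually_ge_atTop 0
  filter_upwards [hnonneg] with x hx
  exact single_le_sum hx hi₀

lemma tendsto_iterate_log_comp_atTop {α : Type*} {f : Filter α} {F : α → ℝ}
    (hF : Tendsto F f atTop) (m : ℕ) : Tendsto (fun x => Real.log^[m] (F x)) f atTop := by
  induction m with
  | zero => exact hF
  | succ m ih =>
    simp only [Function.iterate_succ_apply']
    exact Real.tendsto_log_atTop.comp ih

lemma tendsto_log_exp_sub_one_sub {α : Type*} {f : Filter α} {S : α → ℝ}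
    (hS : Tendsto S f atTop) :
    Tendsto (fun x => Real.log (Real.exp (S x) - 1) - S x) f (nhds 0) := by
  have hlim : Tendsto (fun x => Real.log (1 - Real.exp (-S x))) f (nhds 0) := by
    have h : Tendsto (fun x => 1 - Real.exp (-S x)) f (nhds 1) := by
      simpa using (Real.tendsto_exp_atBot.comp (tendsto_neg_atTop_atBot.comp hS)).const_sub 1
    rw [← Real.log_one]
    exact (Real.continuousAt_log one_ne_zero).tendsto.comp h
  refine hlim.congr' ?_
  filter_upwards [hS.eventually_gt_atTop 0] with x hx
  have hpos : 0 < Real.exp (S x) - 1 := by linarith [Real.add_one_lt_exp hx.ne']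
  calc Real.log (1 - Real.exp (-S x))
      = Real.log ((Real.exp (S x) - 1) * Real.exp (-S x)) := by
        rw [sub_mul, ← Real.exp_add, add_neg_cancel, Real.exp_zero, one_mul]
    _ = Real.log (Real.exp (S x) - 1) - S x := by
        rw [Real.log_mul hpos.ne' (Real.exp_ne_zero _), Real.log_exp]
        ring

lemma tendsto_log_sub_of_tendsto_mul_exp_neg {α : Type*} {f : Filter α} {g h S : α → ℝ}
    {a c : ℝ} (ha : 0 < a) (hS : Tendsto S f atTop)
    (hgh : Tendsto (fun x => g x - h x) f (nhds c))
    (hh : Tendsto (fun x => h x * Real.exp (-S x)) f (nhds a)) :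
    Tendsto (fun x => Real.log (g x) - S x) f (nhds (Real.log a)) := by
  have hexp : Tendsto (fun x => Real.exp (-S x)) f (nhds 0) :=
    Real.tendsto_exp_atBot.comp (tendsto_neg_atTop_atBot.comp hS)
  have hg : Tendsto (fun x => g x * Real.exp (-S x)) f (nhds a) := by
    have := (hgh.mul hexp).add hh
    rw [mul_zero, zero_add] at this
    exact this.congr fun x => by ring
  have hgpos : ∀ᶠ x in f, 0 < g x := by
    filter_upwards [hg.eventually (eventually_gt_nhds ha)] with x hx
    exact pos_of_mul_pos_left hx (Real.exp_pos _).le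
  refine ((Real.continuousAt_log ha.ne').tendsto.comp hg).congr' ?_
  filter_upwards [hgpos] with x hx
  simp only [Function.comp_apply]
  rw [Real.log_mul hx.ne' (Real.exp_ne_zero _), Real.log_exp, sub_eq_add_neg]

section Network

variable {L : ℕ} {n : ℕ → ℕ} {w : ℕ → ℕ → ℕ → ℝ}

lemma tendsto_expOut_atTop (hpos : ∀ l ≤ L, 0 < n l)
    (hw : ∀ l < L, ∀ i < n (l + 1), ∀ j < n l, 0 < w (l + 1) i j) :
    ∀ l ≤ L, ∀ i < n l, Tendsto (expOut n w l i) atTop atTop := by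
  intro l
  induction l with
  | zero => exact fun _ _ _ => tendsto_id
  | succ l ih =>
    intro hl i hi
    have hS : Tendsto (preActivation n w l i) atTop atTop :=
      tendsto_finset_sum_atTop (mem_range.2 (hpos l (by omega))) fun j hj =>
        (ih (by omega) j (mem_range.1 hj)).const_mul_atTop (hw l hl i hi j (mem_range.1 hj))
    exact tendsto_atTop_add_const_right _ (-1) (Real.tendsto_exp_atTop.comp hS)

lemma tendsto_preActivation_atTop (hpos : ∀ l ≤ L, 0 < n l)
    (hw : ∀ l < L, ∀ i < n (l + 1), ∀ j < n l, 0 < w (l + 1) i j)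
    {l : ℕ} (hl : l < L) {i : ℕ} (hi : i < n (l + 1)) :
    Tendsto (preActivation n w l i) atTop atTop :=
  tendsto_finset_sum_atTop (mem_range.2 (hpos l hl.le)) fun j hj =>
    (tendsto_expOut_atTop hpos hw l hl.le j (mem_range.1 hj)).const_mul_atTop
      (hw l hl i hi j (mem_range.1 hj))

lemma tendsto_preActivation_sub_atTop (hpos : ∀ l ≤ L, 0 < n l) (hw : Wo L n w)
    {l : ℕ} (hl : l + 1 < L) {j : ℕ} (hj₀ : 0 < j) (hj : j < n (l + 1)) :
    Tendsto (fun x => preActivation n w l 0 x - preActivation n w l j x) atTop atTop := by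
  simp only [preActivation, ← sum_sub_distrib, ← sub_mul]
  refine tendsto_finset_sum_atTop (mem_range.2 (hpos l (by omega))) fun k hk => ?_
  exact (tendsto_expOut_atTop hpos hw.1 l (by omega) k (mem_range.1 hk)).const_mul_atTop
    (sub_pos.2 (hw.2 l (by omega) k (mem_range.1 hk) 0 j hj₀ hj))

lemma tendsto_preActivation_mul_exp_neg (hpos : ∀ l ≤ L, 0 < n l) (hw : Wo L n w)
    {l : ℕ} (hl : l + 2 ≤ L) :
    Tendsto (fun x => preActivation n w (l + 1) 0 x * Real.exp (-preActivation n w l 0 x))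
      atTop (nhds (w (l + 2) 0 0)) := by
  have hexp : Tendsto (fun x => Real.exp (-preActivation n w l 0 x)) atTop (nhds 0) :=
    Real.tendsto_exp_atBot.comp (tendsto_neg_atTop_atBot.comp
      (tendsto_preActivation_atTop hpos hw.1 (by omega) (hpos (l + 1) (by omega))))
  have hterm : ∀ j ∈ range (n (l + 1)), Tendsto
      (fun x => w (l + 2) 0 j * (Real.exp (preActivation n w l j x - preActivation n w l 0 x) -
        Real.exp (-preActivation n w l 0 x)))
      atTop (nhds (if j = 0 then w (l + 2) 0 0 else 0)) := by
    intro j hj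
    rcases Nat.eq_zero_or_pos j with rfl | hj₀
    · simpa using (hexp.const_sub 1).const_mul (w (l + 2) 0 0)
    · have hdecay : Tendsto
          (fun x => Real.exp (preActivation n w l j x - preActivation n w l 0 x)) atTop (nhds 0) := by
        refine Real.tendsto_exp_atBot.comp ((tendsto_neg_atTop_atBot.comp
          (tendsto_preActivation_sub_atTop hpos hw (by omega) hj₀ (mem_range.1 hj))).congr
          fun x => neg_sub _ _)
      simpa [hj₀.ne'] using (hdecay.sub hexp).const_mul (w (l + 2) 0 j)
  have hsum := tendsto_finsetSum _ hterm
  rw [sum_ite_eq', if_pos (mem_range.2 (hpos (l + 1) (by omega)))] at hsum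
  refine hsum.congr fun x => ?_
  simp only [preActivation, sum_mul]
  refine sum_congr rfl fun j _ => ?_
  rw [expOut_succ, Real.exp_sub, Real.exp_neg]
  simp only [preActivation]
  ring

lemma tendsto_iterate_log_sub_preActivation_of_tendsto (hpos : ∀ l ≤ L, 0 < n l)
    (hw : Wo L n w) {l : ℕ} (hl : l + 2 ≤ L) {c : ℝ}
    (hc : Tendsto (fun x => Real.log^[L - (l + 1)] (expOut n w L 0 x) -
      preActivation n w (l + 1) 0 x) atTop (nhds c)) :
    Tendsto (fun x => Real.log^[L - l] (expOut n w L 0 x) - preActivation n w l 0 x)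
      atTop (nhds (Real.log (w (l + 2) 0 0))) := by
  rw [show L - l = L - (l + 1) + 1 by omega]
  simp only [Function.iterate_succ_apply']
  exact tendsto_log_sub_of_tendsto_mul_exp_neg
    (hw.1 (l + 1) (by omega) 0 (hpos (l + 2) hl) 0 (hpos (l + 1) (by omega)))
    (tendsto_preActivation_atTop hpos hw.1 (by omega) (hpos (l + 1) (by omega))) hc
    (tendsto_preActivation_mul_exp_neg hpos hw hl)

lemma exists_tendsto_iterate_log_sub_preActivation (hpos : ∀ l ≤ L, 0 < n l) (hw : Wo L n w)
    {l : ℕ} (hl : l < L) :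
    ∃ c, Tendsto (fun x => Real.log^[L - l] (expOut n w L 0 x) - preActivation n w l 0 x)
      atTop (nhds c) := by
  obtain ⟨d, hd⟩ : ∃ d, L - l = d + 1 := ⟨L - l - 1, by omega⟩
  induction d generalizing l with
  | zero =>
    obtain rfl : L = l + 1 := by omega
    refine ⟨0, ?_⟩
    simpa [expOut_succ] using tendsto_log_exp_sub_one_sub
      (tendsto_preActivation_atTop hpos hw.1 hl (hpos (l + 1) (by omega)))
  | succ d ih =>
    obtain ⟨c, hc⟩ := ih (l := l + 1) (by omega) (by omega)
    exact ⟨_, tendsto_iterate_log_sub_preActivation_of_tendsto hpos hw (by omega) hc⟩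

end Network

theorem stmt_12_general (L : ℕ) (n : ℕ → ℕ)
    (hpos : ∀ l ≤ L, 0 < n l) (w : ℕ → ℕ → ℕ → ℝ) (hw : Wo L n w)
    (l : ℕ) (hl : l + 2 ≤ L) :
    (∀ m < L - l, ∀ᶠ x in atTop, 0 < Real.log^[m] (expOut n w L 0 x)) ∧
    Tendsto
      (fun x => Real.log^[L - l] (expOut n w L 0 x) -
        ∑ j ∈ Finset.range (n l), w (l + 1) 0 j * expOut n w l j x)
      atTop (nhds (Real.log (w (l + 2) 0 0))) := by
  have hF : Tendsto (expOut n w L 0) atTop atTop :=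
    tendsto_expOut_atTop hpos hw.1 L le_rfl 0 (hpos L le_rfl)
  refine ⟨fun m _ => (tendsto_iterate_log_comp_atTop hF m).eventually_gt_atTop 0, ?_⟩
  obtain ⟨c, hc⟩ := exists_tendsto_iterate_log_sub_preActivation hpos hw (l := l + 1) (by omega)
  exact tendsto_iterate_log_sub_preActivation_of_tendsto hpos hw hl hc

/-- **(Intermediate asymptotics of iterated logarithms).** For a fully-connected layered
feed-forward network of depth `L ≥ 1` with one source and one sink, activation
`f x = e^x - 1`, weight family `W ∈ W_o` and measured function `F = F^L_1 = expOut n w L 0`,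
for every `l ∈ {0, …, L-2}` the quantity
`log^{∘(L-l)} (F x) - ∑_{j ∈ N^l} w^{l+1}_{1j} F^l_j (x)` is eventually well defined (the
arguments of all the logarithms involved are eventually positive) and converges to
`log (w^{l+2}_{11})` as `x → +∞`. -/
theorem stmt_12 (L : ℕ) (hL : 1 ≤ L) (n : ℕ → ℕ) (hn0 : n 0 = 1) (hnL : n L = 1)
    (hpos : ∀ l ≤ L, 0 < n l) (w : ℕ → ℕ → ℕ → ℝ) (hw : Wo L n w)
    (l : ℕ) (hl : l + 2 ≤ L) :
    (∀ m < L - l, ∀ᶠ x in atTop, 0 < Real.log^[m] (expOut n w L 0 x)) ∧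
    Tendsto
      (fun x => Real.log^[L - l] (expOut n w L 0 x) -
        ∑ j ∈ Finset.range (n l), w (l + 1) 0 j * expOut n w l j x)
      atTop (nhds (Real.log (w (l + 2) 0 0))) :=
  stmt_12_general L n hpos w hw l hl
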